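/- Let U be an incoherent unitary on ℂ^{d₁} ⊗ ℂ^{d₂} (with respect to the product computational basis), let τ be a quantum state on ℂ^{d₂}, and let V be a unitary on ℂ^{d₁} such that Tr₂(U (ρ ⊗ τ) U†) = V ρ V† for every quantum state ρ on ℂ^{d₁}. Then V is incoherent. In particular, incoherent unitaries together with an arbitrary ancilla state cannot exactly and deterministically implement any coherent unitary, such as the Hadamard gate. -/

import Mathlib

open Matrix Complex
open scoped Kronecker Classical ComplexOrder

noncomputable section

/-- A matrix is *incoherent* (w.r.t. the computational basis) if it has the form
`Σ_x e^{iθ_x} |π(x)⟩⟨x|` for a permutation `π` and real phases `θ`. -/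
def IsIncoherent {d : Type*} [Fintype d] [DecidableEq d] (U : Matrix d d ℂ) : Prop :=
  ∃ (π : Equiv.Perm d) (θ : d → ℝ),
    U = Matrix.of fun i j => if i = π j then Complex.exp ((θ j : ℂ) * Complex.I) else 0

/-- The dephasing map `Δ`, zeroing all off-diagonal entries. -/
def dephase {d : Type*} [DecidableEq d] (ρ : Matrix d d ℂ) : Matrix d d ℂ :=
  Matrix.of fun i j => if i = j then ρ i j else 0

/-- Partial trace over the second tensor factor. -/
def ptrace2 {α β : Type*} [Fintype β] (A : Matrix (α × β) (α × β) ℂ) : Matrix α α ℂ :=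
  Matrix.of fun i i' => ∑ j, A (i, j) (i', j)

/-- Partial trace over the first tensor factor. -/
def ptrace1 {α β : Type*} [Fintype α] (A : Matrix (α × β) (α × β) ℂ) : Matrix β β ℂ :=
  Matrix.of fun j j' => ∑ i, A (i, j) (i, j')

/-- A quantum state: positive semidefinite matrix of trace one. -/
def IsState {d : Type*} [Fintype d] (ρ : Matrix d d ℂ) : Prop :=
  ρ.PosSemidef ∧ ρ.trace = 1

/-- The Choi matrix of a linear map between matrix algebras. -/
def choiMatrix {a b : Type*} [Fintype a] [DecidableEq a] [Fintype b]
    (E : Matrix a a ℂ →ₗ[ℂ] Matrix b b ℂ) : Matrix (a × b) (a × b) ℂ :=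
  Matrix.of fun p q => E (Matrix.single p.1 q.1 1) p.2 q.2

/-- A quantum channel: completely positive (PSD Choi matrix) trace-preserving linear map. -/
def IsChannel {a b : Type*} [Fintype a] [DecidableEq a] [Fintype b] [DecidableEq b]
    (E : Matrix a a ℂ →ₗ[ℂ] Matrix b b ℂ) : Prop :=
  (choiMatrix E).PosSemidef ∧ ∀ ρ, (E ρ).trace = ρ.trace

/-- The positive semidefinite square root (as in Mathlib, Dec 2024). -/
def Matrix.PosSemidef.sqrt {n 𝕜 : Type*} [Fintype n] [DecidableEq n] [RCLike 𝕜]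
    {A : Matrix n n 𝕜} (hA : A.PosSemidef) : Matrix n n 𝕜 :=
  (hA.1.eigenvectorUnitary : Matrix n n 𝕜) *
    diagonal ((RCLike.ofReal : ℝ → 𝕜) ∘ Real.sqrt ∘ hA.1.eigenvalues) *
    (star hA.1.eigenvectorUnitary : Matrix n n 𝕜)

/-- The trace norm `‖M‖₁ = Tr √(M†M)`. -/
def traceNorm {d : Type*} [Fintype d] [DecidableEq d] (M : Matrix d d ℂ) : ℝ :=
  ((Matrix.posSemidef_conjTranspose_mul_self M).sqrt.trace).re

/-- The trace distance `D(ρ,σ) = ½‖ρ−σ‖₁`. -/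
def traceDist {d : Type*} [Fintype d] [DecidableEq d] (ρ σ : Matrix d d ℂ) : ℝ :=
  traceNorm (ρ - σ) / 2

/-- The coherence rank of a vector: the number of nonzero coordinates. -/
def cohRank {d : Type*} [Fintype d] (ψ : d → ℂ) : ℕ :=
  (Finset.univ.filter fun x => ψ x ≠ 0).card

/-- The Hadamard gate. -/
def Hmat : Matrix (Fin 2) (Fin 2) ℂ :=
  Matrix.of fun a b => (((Real.sqrt 2)⁻¹ : ℝ) : ℂ) * (if a = 1 ∧ b = 1 then -1 else 1)

/-- `H^{⊗n}`, the n-fold Kronecker power of the Hadamard gate. -/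
def Hpow (n : ℕ) : Matrix (Fin n → Fin 2) (Fin n → Fin 2) ℂ :=
  Matrix.of fun i j => ∏ q, Hmat (i q) (j q)

/-- A generalized controlled-Hadamard on qubits indexed by `I`: for some target qubit `t`
and set `S` of configurations of the other qubits, apply `H` on qubit `t` controlled on the
other qubits being in `S`. -/
def IsCtrlHadamard {I : Type*} [Fintype I] [DecidableEq I]
    (V : Matrix (I → Fin 2) (I → Fin 2) ℂ) : Prop :=
  ∃ (t : I) (S : Finset ({i : I // i ≠ t} → Fin 2)),
    V = Matrix.of fun a b =>
      if (fun i : {i : I // i ≠ t} => b i.1) ∈ S then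
        (if ∀ i, i ≠ t → a i = b i then Hmat (a t) (b t) else 0)
      else (if a = b then (1 : ℂ) else 0)

/-- The alternating product `U_k * V_k * ⋯ * U_1 * V_1 * U_0`. -/
def altProd {X : Type*} [Monoid X] : (k : ℕ) → (Fin (k + 1) → X) → (Fin k → X) → X
  | 0, Us, _ => Us 0
  | (k + 1), Us, Vs =>
      Us (Fin.last (k + 1)) * Vs (Fin.last k) *
        altProd k (fun i => Us i.castSucc) (fun i => Vs i.castSucc)

lemma aux_sum_pair {d : Type*} [Fintype d] [DecidableEq d] {f : d → ℂ} (i j : d) (h : i ≠ j)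
    (hf : ∀ x, x ≠ i → x ≠ j → f x = 0) : ∑ x, f x = f i + f j := by
  rw [← Finset.sum_subset (Finset.subset_univ ({i, j} : Finset d))
    (fun x _ hx => hf x (fun h' => hx (by simp [h'])) (fun h' => hx (by simp [h'])))]
  rw [Finset.sum_pair h]

lemma aux_phase_mul_star (θ : ℝ) :
    Complex.exp ((θ:ℂ)*I) * star (Complex.exp ((θ:ℂ)*I)) = 1 := by
  rw [show star (Complex.exp ((θ:ℂ)*I)) = Complex.exp (-((θ:ℂ)*I)) by
    rw [show (star (Complex.exp ((θ:ℂ)*I))) = (starRingEnd ℂ) (Complex.exp ((θ:ℂ)*I)) from rfl,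
      ← Complex.exp_conj]
    congr 1
    simp [Complex.conj_ofReal]]
  rw [← Complex.exp_add]; simp

lemma aux_conj_diag {n : Type*} [Fintype n] [DecidableEq n]
    (π : Equiv.Perm n) (θ : n → ℝ) (M : Matrix n n ℂ) (p : n) :
    ((Matrix.of fun i j => if i = π j then Complex.exp ((θ j : ℂ) * Complex.I) else 0) * M *
      (Matrix.of fun i j => if i = π j then Complex.exp ((θ j : ℂ) * Complex.I) else 0)ᴴ)
      p p = M (π.symm p) (π.symm p) := by
  classical
  have hmul : ∀ q, (((Matrix.of fun i j => if i = π j then Complex.exp ((θ j : ℂ) * Complex.I) else 0) : Matrix n n ℂ) * M) p q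
      = Complex.exp ((θ (π.symm p) : ℂ) * Complex.I) * M (π.symm p) q := by
    intro q
    rw [Matrix.mul_apply, Finset.sum_eq_single (π.symm p)]
    · simp
    · intro x _ hx
      have hpx : p ≠ π x := fun h => hx (by rw [h, Equiv.symm_apply_apply])
      simp [hpx]
    · simp
  rw [Matrix.mul_apply, Finset.sum_eq_single (π.symm p)]
  · rw [hmul]
    simp only [Matrix.conjTranspose_apply, Matrix.of_apply, Equiv.apply_symm_apply, eq_self_iff_true, if_true]
    rw [show Complex.exp ((θ (π.symm p) : ℂ) * Complex.I) * M (π.symm p) (π.symm p) *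
        star (Complex.exp ((θ (π.symm p) : ℂ) * Complex.I))
      = (Complex.exp ((θ (π.symm p) : ℂ) * Complex.I) * star (Complex.exp ((θ (π.symm p) : ℂ) * Complex.I))) * M (π.symm p) (π.symm p) by ring,
      aux_phase_mul_star, one_mul]
  · intro x _ hx
    have hpx : p ≠ π x := fun h => hx (by rw [h, Equiv.symm_apply_apply])
    simp [Matrix.conjTranspose_apply, hpx]
  · simp

lemma aux_quad {d : Type*} [Fintype d] [DecidableEq d] (V : Matrix d d ℂ) (c : d → ℂ) (a : d) :
    (V * Matrix.of (fun x y => c x * star (c y)) * Vᴴ) a a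
      = (∑ x, V a x * c x) * star (∑ x, V a x * c x) := by
  rw [Matrix.mul_apply, star_sum]
  rw [Finset.sum_mul_sum]
  rw [Finset.sum_comm]
  apply Finset.sum_congr rfl
  intro y _
  rw [Matrix.mul_apply, Finset.sum_mul]
  apply Finset.sum_congr rfl
  intro x _
  simp only [Matrix.conjTranspose_apply, Matrix.of_apply, star_mul']
  ring

/-- If an incoherent unitary `U` on a bipartite system together with an ancilla
state `τ` implements a unitary `V`, i.e. `Tr₂(U (ρ ⊗ τ) U†) = V ρ V†` for all states `ρ`,
then `V` is incoherent. -/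
theorem incoherent_unitary_ancilla_no_coherent
    (d₁ d₂ : ℕ) (U : Matrix (Fin d₁ × Fin d₂) (Fin d₁ × Fin d₂) ℂ)
    (hUni : U ∈ Matrix.unitaryGroup (Fin d₁ × Fin d₂) ℂ) (hInc : IsIncoherent U)
    (τ : Matrix (Fin d₂) (Fin d₂) ℂ) (hτ : IsState τ)
    (V : Matrix (Fin d₁) (Fin d₁) ℂ) (hV : V ∈ Matrix.unitaryGroup (Fin d₁) ℂ)
    (himpl : ∀ ρ, IsState ρ → ptrace2 (U * (ρ ⊗ₖ τ) * Uᴴ) = V * ρ * Vᴴ) :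
    IsIncoherent V := by
  obtain ⟨π, θ, hU⟩ := hInc
  subst hU
  -- Step 1: the diagonal of V ρ Vᴴ only depends on the diagonal of ρ
  have hdiag : ∀ ρ₁ ρ₂ : Matrix (Fin d₁) (Fin d₁) ℂ, IsState ρ₁ → IsState ρ₂ →
      (∀ x, ρ₁ x x = ρ₂ x x) → ∀ a, (V * ρ₁ * Vᴴ) a a = (V * ρ₂ * Vᴴ) a a := by
    intro ρ₁ ρ₂ h1 h2 hd a
    rw [← himpl ρ₁ h1, ← himpl ρ₂ h2]
    simp only [ptrace2, Matrix.of_apply]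
    apply Finset.sum_congr rfl
    intro b _
    rw [aux_conj_diag, aux_conj_diag]
    simp [Matrix.kroneckerMap_apply, hd]
  -- Step 2: entrywise row orthogonality
  have horth : ∀ (a i i' : Fin d₁), i ≠ i' → V a i * star (V a i') = 0 := by
    intro a i i' hne
    set s : ℝ := (Real.sqrt 2)⁻¹ with hs
    have hstars : star ((s : ℂ)) = (s : ℂ) := Complex.conj_ofReal s
    have hss : (s : ℂ) * (s : ℂ) = 1/2 := by
      have h2 : Real.sqrt 2 * Real.sqrt 2 = 2 := Real.mul_self_sqrt (by norm_num)
      have hr : s * s = 1/2 := by rw [hs, ← mul_inv, h2]; norm_num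
      calc (s:ℂ) * (s:ℂ) = ((s * s : ℝ) : ℂ) := by push_cast; ring
        _ = 1/2 := by rw [hr]; norm_num
    have main : ∀ z : ℂ, z * star z = 1 →
        (V a i * star (V a i')) * star z + (V a i' * star (V a i)) * z = 0 := by
      intro z hz
      set c : Fin d₁ → ℂ := fun x => if x = i then (s:ℂ) else if x = i' then z * (s:ℂ) else 0
        with hc
      have hci : c i = (s:ℂ) := by simp [hc]
      have hci' : c i' = z * (s:ℂ) := by simp [hc, Ne.symm hne]
      have hρ : IsState (Matrix.of (fun x y => c x * star (c y))) := by
        constructor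
        · have hfac : (Matrix.of (fun x y => c x * star (c y)) : Matrix (Fin d₁) (Fin d₁) ℂ)
              = (Matrix.of (fun (_ : Fin 1) x => star (c x)))ᴴ *
                (Matrix.of (fun (_ : Fin 1) x => star (c x))) := by
            ext x y
            simp [Matrix.mul_apply, Matrix.conjTranspose_apply]
          rw [hfac]
          exact Matrix.posSemidef_conjTranspose_mul_self _
        · simp only [Matrix.trace, Matrix.diag, Matrix.of_apply]
          rw [aux_sum_pair i i' hne (fun x hx1 hx2 => by simp [hc, hx1, hx2])]
          rw [hci, hci', hstars, star_mul', hstars]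
          linear_combination 2 * hss + ((s:ℂ) * (s:ℂ)) * hz
      have hD : IsState (Matrix.diagonal (fun x : Fin d₁ => if x = i ∨ x = i' then (1/2:ℂ) else 0)) := by
        constructor
        · refine Matrix.posSemidef_diagonal_iff.mpr fun x => ?_
          by_cases hx : x = i ∨ x = i' <;> simp [hx]
        · rw [Matrix.trace_diagonal]
          rw [aux_sum_pair i i' hne (fun x hx1 hx2 => by simp [hx1, hx2])]
          simp
          norm_num
      have hdd : ∀ x, (Matrix.of (fun x y => c x * star (c y))) x x
          = (Matrix.diagonal (fun x : Fin d₁ => if x = i ∨ x = i' then (1/2:ℂ) else 0)) x x := by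
        intro x
        by_cases h1 : x = i
        · subst h1
          simp only [Matrix.of_apply, hci, Matrix.diagonal_apply_eq, hstars]
          simp only [true_or, if_pos]
          exact hss
        · by_cases h2 : x = i'
          · subst h2
            simp only [Matrix.of_apply, hci', Matrix.diagonal_apply_eq]
            rw [star_mul', hstars]
            simp only [or_true, if_pos]
            linear_combination ((s:ℂ) * (s:ℂ)) * hz + hss
          · simp [hc, h1, h2, Matrix.diagonal_apply_eq]
      have key := hdiag _ _ hρ hD hdd a
      rw [aux_quad] at key
      rw [aux_sum_pair i i' hne (fun x hx1 hx2 => by simp [hc, hx1, hx2])] at key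
      rw [hci, hci'] at key
      have hstarsum : star (V a i * (s:ℂ) + V a i' * (z * (s:ℂ)))
          = star (V a i) * (s:ℂ) + star (V a i') * (star z * (s:ℂ)) := by
        rw [star_add, star_mul', star_mul', hstars, star_mul', hstars]
      rw [hstarsum] at key
      have hdr : (V * Matrix.diagonal (fun x : Fin d₁ => if x = i ∨ x = i' then (1/2:ℂ) else 0) * Vᴴ) a a
          = V a i * star (V a i) * (1/2) + V a i' * star (V a i') * (1/2) := by
        rw [Matrix.mul_apply]
        rw [aux_sum_pair i i' hne (fun x hx1 hx2 => by
          rw [Matrix.mul_diagonal]; simp [hx1, hx2])]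
        rw [Matrix.mul_diagonal, Matrix.mul_diagonal]
        simp only [Matrix.conjTranspose_apply, true_or, or_true, if_pos]
        ring
      rw [hdr] at key
      linear_combination 2 * key
        - 2 * (V a i * star (V a i) + (V a i * star (V a i')) * star z
            + (V a i' * star (V a i)) * z + (V a i' * star (V a i')) * (z * star z)) * hss
        - (V a i' * star (V a i')) * hz
    have e1 := main 1 (by simp)
    have e2 := main Complex.I (by simp [Complex.conj_I])
    simp only [star_one, mul_one] at e1
    rw [show star Complex.I = -Complex.I from Complex.conj_I] at e2
    linear_combination (1/2 : ℂ) * e1 + (Complex.I/2) * e2 + ((V a i * star (V a i') - V a i' * star (V a i))/2) * Complex.I_mul_I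
  -- Step 3: build the permutation
  have hVVh : V * Vᴴ = 1 := by
    have h := Matrix.mem_unitaryGroup_iff.mp hV
    rwa [Matrix.star_eq_conjTranspose] at h
  have hVhV : Vᴴ * V = 1 := by
    have h := Matrix.mem_unitaryGroup_iff'.mp hV
    rwa [Matrix.star_eq_conjTranspose] at h
  have hrowsum : ∀ a, ∑ j, V a j * star (V a j) = 1 := by
    intro a
    have h : (V * Vᴴ) a a = (1 : Matrix (Fin d₁) (Fin d₁) ℂ) a a := by rw [hVVh]
    simpa [Matrix.mul_apply, Matrix.conjTranspose_apply, Matrix.one_apply] using h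
  have hcolsum : ∀ j, ∑ a, star (V a j) * V a j = 1 := by
    intro j
    have h : (Vᴴ * V) j j = (1 : Matrix (Fin d₁) (Fin d₁) ℂ) j j := by rw [hVhV]
    simpa [Matrix.mul_apply, Matrix.conjTranspose_apply, Matrix.one_apply] using h
  have hrow : ∀ a, ∃ j, V a j ≠ 0 := by
    intro a
    by_contra h
    push_neg at h
    have := hrowsum a
    simp [h] at this
  have hcol : ∀ j, ∃ a, V a j ≠ 0 := by
    intro j
    by_contra h
    push_neg at h
    have := hcolsum j
    simp [h] at this
  set σ : Fin d₁ → Fin d₁ := fun a => Classical.choose (hrow a) with hσdef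
  have hσ : ∀ a, V a (σ a) ≠ 0 := fun a => Classical.choose_spec (hrow a)
  have hzero : ∀ a j, j ≠ σ a → V a j = 0 := by
    intro a j hj
    rcases mul_eq_zero.mp (horth a j (σ a) hj) with h | h
    · exact h
    · exact absurd (star_eq_zero.mp h) (hσ a)
  have hsurj : Function.Surjective σ := by
    intro j
    obtain ⟨a, ha⟩ := hcol j
    refine ⟨a, ?_⟩
    by_contra hne
    exact ha (hzero a j (Ne.symm hne))
  have hbij : Function.Bijective σ := ⟨Finite.injective_iff_surjective.mpr hsurj, hsurj⟩
  set e : Equiv.Perm (Fin d₁) := Equiv.ofBijective σ hbij with he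
  have happ : ∀ a, e a = σ a := fun a => rfl
  have hsymm : ∀ b, σ (e.symm b) = b := fun b => e.apply_symm_apply b
  have hnorm : ∀ a, V a (σ a) * star (V a (σ a)) = 1 := by
    intro a
    have h := hrowsum a
    rwa [Finset.sum_eq_single (σ a) (fun b _ hb => by rw [hzero a b hb]; ring) (by simp)] at h
  have habs : ∀ a, ‖V a (σ a)‖ = 1 := by
    intro a
    have h2 : (Complex.normSq (V a (σ a)) : ℂ) = 1 := by
      rw [← Complex.mul_conj]; exact hnorm a
    have h3 : Complex.normSq (V a (σ a)) = 1 := by exact_mod_cast h2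
    rw [Complex.norm_def, h3, Real.sqrt_one]
  refine ⟨e.symm, fun j => Complex.arg (V (e.symm j) j), ?_⟩
  ext a b
  by_cases hab : a = e.symm b
  · subst hab
    simp only [Matrix.of_apply, if_pos rfl]
    have h1 : ‖V (e.symm b) b‖ = 1 := by
      have := habs (e.symm b)
      rwa [hsymm b] at this
    have h2 := Complex.norm_mul_exp_arg_mul_I (V (e.symm b) b)
    rw [h1, Complex.ofReal_one, one_mul] at h2
    exact h2.symm
  · simp only [Matrix.of_apply, if_neg hab]
    apply hzero
    intro hba
    have heab : e a = b := (happ a).trans hba.symm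
    exact hab ((Equiv.eq_symm_apply e).mpr heab)
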